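/- Assume (H1) and (H3). If u* is an amenable complete trajectory at q ∈ Q and v* is a complete trajectory at q such that V(u*(t) − v*(t)) ≤ 0 for every t ∈ ℝ (where V(u) := (Pu,u)), then v* is amenable. -/

import Mathlib

open MeasureTheory Set Bornology Filter Topology RealInnerProductSpace

noncomputable section

variable {Q H : Type*}

section Defs
variable [MetricSpace Q] [NormedAddCommGroup H] [InnerProductSpace ℝ H] [CompleteSpace H]

def IsFlow (ϑ : ℝ → Q → Q) : Prop :=
  (∀ q, ϑ 0 q = q) ∧ (∀ t s q, ϑ (t + s) q = ϑ t (ϑ s q)) ∧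
    Continuous fun p : ℝ × Q => ϑ p.1 p.2

def IsCocycle (ϑ : ℝ → Q → Q) (ψ : ℝ → Q → H → H) : Prop :=
  (∀ q u, ψ 0 q u = u) ∧
  (∀ t s : ℝ, 0 ≤ t → 0 ≤ s → ∀ q u, ψ (t + s) q u = ψ t (ϑ s q) (ψ s q u)) ∧
  ContinuousOn (fun p : ℝ × Q × H => ψ p.1 p.2.1 p.2.2) {p : ℝ × Q × H | 0 ≤ p.1}

def IsCompleteTraj (ϑ : ℝ → Q → Q) (ψ : ℝ → Q → H → H) (q : Q) (u : ℝ → H) : Prop :=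
  Continuous u ∧ ∀ t s : ℝ, 0 ≤ t → u (t + s) = ψ t (ϑ s q) (u s)

def IsAmenable (ν : ℝ) (u : ℝ → H) : Prop :=
  IntegrableOn (fun s : ℝ => Real.exp (2 * ν * s) * ‖u s‖ ^ 2) (Set.Iic (0:ℝ))

def amenSet (ϑ : ℝ → Q → Q) (ψ : ℝ → Q → H → H) (ν : ℝ) (q : Q) : Set H :=
  {u₀ | ∃ u : ℝ → H, IsCompleteTraj ϑ ψ q u ∧ IsAmenable ν u ∧ u 0 = u₀}

structure HypH1 (P : H →L[ℝ] H) (Hplus Hminus : Submodule ℝ H) : Prop where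
  selfAdj : IsSelfAdjoint P
  closed_plus : IsClosed (Hplus : Set H)
  orth : Hminus = Hplusᗮ
  inv_plus : ∀ u ∈ Hplus, P u ∈ Hplus
  inv_minus : ∀ u ∈ Hminus, P u ∈ Hminus
  pos : ∀ u ∈ Hplus, u ≠ 0 → (0:ℝ) < ⟪P u, u⟫
  neg : ∀ u ∈ Hminus, u ≠ 0 → ⟪P u, u⟫ < 0

def HypH2 (Hminus : Submodule ℝ H) (j : ℕ) : Prop :=
  FiniteDimensional ℝ Hminus ∧ Module.finrank ℝ Hminus = j

def HypH3 (ψ : ℝ → Q → H → H) (P : H →L[ℝ] H) (δ ν : ℝ) : Prop :=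
  0 < δ ∧ 0 < ν ∧ ∀ (q : Q) (u v : H) (l r : ℝ), 0 ≤ l → l ≤ r →
    Real.exp (2 * ν * r) * ⟪P (ψ r q u - ψ r q v), ψ r q u - ψ r q v⟫ -
      Real.exp (2 * ν * l) * ⟪P (ψ l q u - ψ l q v), ψ l q u - ψ l q v⟫ ≤
      -δ * ∫ s in l..r, Real.exp (2 * ν * s) * ‖ψ s q u - ψ s q v‖ ^ 2

def IsOrthProjOnto (Hminus : Submodule ℝ H) (Pi : H →L[ℝ] H) : Prop :=
  (∀ u, Pi u ∈ Hminus) ∧ ∀ u, u - Pi u ∈ Hminusᗮ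

def HypCOM2 (ψ : ℝ → Q → H → H) : Prop :=
  ∃ tc : ℝ, 0 < tc ∧ ∀ (q : Q) (s : Set H), IsBounded s → IsCompact (closure (ψ tc q '' s))

def HypCOM3 (ψ : ℝ → Q → H → H) : Prop :=
  ∀ (q : Q) (u₀ : H), IsBounded ((fun t => ψ t q u₀) '' Set.Ici (0:ℝ)) →
    IsCompact (closure ((fun t => ψ t q u₀) '' Set.Ici (0:ℝ)))

def LyapunovStable (ψ : ℝ → Q → H → H) (q : Q) (v : ℝ → H) : Prop :=
  ∀ ε > 0, ∃ η > 0, ∀ u₀ : H, ‖u₀ - v 0‖ < η → ∀ t ≥ 0, ‖ψ t q u₀ - v t‖ < ε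

end Defs

def circleFlow (σ : ℝ) : ℝ → AddCircle σ → AddCircle σ := fun t θ => θ + (t : AddCircle σ)

/-! Along the difference `w = u* − v*` of two complete trajectories, (H3) says that
`e^{2νt} V(w t) + δ ∫ e^{2νs} |w s|²` is non-increasing in `t`. Since `V(w) ≤ 0` everywhere,
this bounds `∫_a^0 e^{2νs} |w s|² ds` by `−V(w 0)/δ` uniformly in `a ≤ 0`, so `w` is amenable,
and then so is `v* = u* − w`. -/

theorem integrableOn_Iic_of_intervalIntegral_le {f : ℝ → ℝ} {b C : ℝ}
    (hf : LocallyIntegrable f) (hf0 : 0 ≤ f) (h : ∀ a ≤ b, ∫ x in a..b, f x ≤ C) :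
    IntegrableOn f (Iic b) := by
  refine integrableOn_Iic_of_intervalIntegral_norm_bounded C b (a := id) (l := atBot)
    (fun a => (hf.integrableOn_isCompact isCompact_Icc).mono_set Ioc_subset_Icc_self)
    tendsto_id ?_
  filter_upwards [eventually_le_atBot b] with a ha
  simpa only [id, Real.norm_of_nonneg (hf0 _)] using h a ha

section Trajectories

variable [NormedAddCommGroup H] {ϑ : ℝ → Q → Q} {ψ : ℝ → Q → H → H} {q : Q} {u v : ℝ → H}

theorem IsAmenable.sub {ν : ℝ} (hu : IsAmenable ν u) (hv : IsAmenable ν v)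
    (hu_cont : Continuous u) (hv_cont : Continuous v) : IsAmenable ν (u - v) := by
  have h_meas : Continuous fun s => Real.exp (2 * ν * s) * ‖(u - v) s‖ ^ 2 := by fun_prop
  refine Integrable.mono' ((hu.const_mul 2).add (hv.const_mul 2))
    h_meas.aestronglyMeasurable ?_
  filter_upwards with s
  have h_exp : 0 ≤ Real.exp (2 * ν * s) := (Real.exp_pos _).le
  have h_sq : ‖u s - v s‖ ^ 2 ≤ 2 * ‖u s‖ ^ 2 + 2 * ‖v s‖ ^ 2 := by
    nlinarith [norm_sub_le (u s) (v s), norm_nonneg (u s - v s), sq_nonneg (‖u s‖ - ‖v s‖)]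
  rw [Real.norm_of_nonneg (by positivity)]
  simp only [Pi.add_apply, Pi.sub_apply]
  nlinarith [mul_le_mul_of_nonneg_left h_sq h_exp]

theorem IsCompleteTraj.cocycle_apply (hu : IsCompleteTraj ϑ ψ q u) {s : ℝ} (hs : 0 ≤ s)
    (a : ℝ) : ψ s (ϑ a q) (u a) = u (s + a) :=
  (hu.2 s a hs).symm

theorem HypH3.along_completeTraj [InnerProductSpace ℝ H] {P : H →L[ℝ] H} {δ ν : ℝ}
    (h3 : HypH3 ψ P δ ν) (hu : IsCompleteTraj ϑ ψ q u) (hv : IsCompleteTraj ϑ ψ q v)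
    {a b : ℝ} (hab : a ≤ b) :
    Real.exp (2 * ν * b) * ⟪P (u b - v b), u b - v b⟫ -
      Real.exp (2 * ν * a) * ⟪P (u a - v a), u a - v a⟫ ≤
      -δ * ∫ s in a..b, Real.exp (2 * ν * s) * ‖u s - v s‖ ^ 2 := by
  have h := h3.2.2 (ϑ a q) (u a) (v a) 0 (b - a) le_rfl (sub_nonneg.mpr hab)
  have h_shift : (∫ s in (0:ℝ)..(b - a),
      Real.exp (2 * ν * s) * ‖ψ s (ϑ a q) (u a) - ψ s (ϑ a q) (v a)‖ ^ 2) =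
      Real.exp (-(2 * ν * a)) * ∫ s in a..b, Real.exp (2 * ν * s) * ‖u s - v s‖ ^ 2 := by
    rw [← intervalIntegral.integral_const_mul]
    have := intervalIntegral.integral_comp_add_right
      (fun s => Real.exp (-(2 * ν * a)) * (Real.exp (2 * ν * s) * ‖u s - v s‖ ^ 2))
      (a := 0) (b := b - a) a
    simp only [zero_add, sub_add_cancel] at this
    rw [← this]
    refine intervalIntegral.integral_congr fun s hs => ?_
    rw [uIcc_of_le (sub_nonneg.mpr hab)] at hs
    simp only [hu.cocycle_apply hs.1, hv.cocycle_apply hs.1, ← mul_assoc, ← Real.exp_add]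
    ring_nf
  rw [h_shift, hu.cocycle_apply (sub_nonneg.mpr hab), hv.cocycle_apply (sub_nonneg.mpr hab),
    hu.cocycle_apply le_rfl, hv.cocycle_apply le_rfl, sub_add_cancel, zero_add, mul_zero,
    Real.exp_zero, one_mul] at h
  have h_exp_b : Real.exp (2 * ν * b) = Real.exp (2 * ν * a) * Real.exp (2 * ν * (b - a)) := by
    rw [← Real.exp_add]; ring_nf
  have h_exp_a : Real.exp (2 * ν * a) * Real.exp (-(2 * ν * a)) = 1 := by
    rw [← Real.exp_add, add_neg_cancel, Real.exp_zero]
  rw [h_exp_b]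
  linear_combination Real.exp (2 * ν * a) * h +
    (-δ * ∫ s in a..b, Real.exp (2 * ν * s) * ‖u s - v s‖ ^ 2) * h_exp_a

theorem HypH3.intervalIntegral_le_of_V_nonpos [InnerProductSpace ℝ H] {P : H →L[ℝ] H}
    {δ ν : ℝ} (h3 : HypH3 ψ P δ ν) (hu : IsCompleteTraj ϑ ψ q u) (hv : IsCompleteTraj ϑ ψ q v)
    {a b : ℝ} (hab : a ≤ b) (hVa : ⟪P (u a - v a), u a - v a⟫ ≤ 0) :
    ∫ s in a..b, Real.exp (2 * ν * s) * ‖u s - v s‖ ^ 2 ≤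
      -(Real.exp (2 * ν * b) * ⟪P (u b - v b), u b - v b⟫) / δ := by
  rw [le_div_iff₀ h3.1]
  nlinarith [h3.along_completeTraj hu hv hab,
    mul_nonpos_of_nonneg_of_nonpos (Real.exp_pos (2 * ν * a)).le hVa]

end Trajectories

theorem amenable_of_nonpositive_V_general
    {Q H : Type*} [NormedAddCommGroup H] [InnerProductSpace ℝ H]
    (ϑ : ℝ → Q → Q) (ψ : ℝ → Q → H → H)
    (P : H →L[ℝ] H)
    (δ ν : ℝ) (h3 : HypH3 ψ P δ ν)
    (q : Q) (u v : ℝ → H)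
    (hu : IsCompleteTraj ϑ ψ q u) (hua : IsAmenable ν u)
    (hv : IsCompleteTraj ϑ ψ q v)
    (hV : ∀ t : ℝ, ⟪P (u t - v t), u t - v t⟫ ≤ 0) :
    IsAmenable ν v := by
  have h_diff_cont : Continuous (u - v) := hu.1.sub hv.1
  have h_diff : IsAmenable ν (u - v) :=
    integrableOn_Iic_of_intervalIntegral_le (by fun_prop : Continuous _).locallyIntegrable
      (fun s => by positivity)
      (fun a ha => h3.intervalIntegral_le_of_V_nonpos hu hv ha (hV a))
  simpa only [sub_sub_cancel] using hua.sub h_diff hu.1 h_diff_cont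

/-- Lemma 1, item 2: under (H1) and (H3), if `u*` is amenable and `v*` is a complete
trajectory at the same `q` with `V(u*(t) − v*(t)) ≤ 0` for all `t`, then `v*` is
amenable. -/
theorem amenable_of_nonpositive_V
    {Q H : Type*} [MetricSpace Q] [NormedAddCommGroup H] [InnerProductSpace ℝ H]
    [CompleteSpace H] [TopologicalSpace.SeparableSpace H]
    (ϑ : ℝ → Q → Q) (ψ : ℝ → Q → H → H)
    (hflow : IsFlow ϑ) (hcoc : IsCocycle ϑ ψ)
    (P : H →L[ℝ] H) (Hplus Hminus : Submodule ℝ H)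
    (h1 : HypH1 P Hplus Hminus)
    (δ ν : ℝ) (h3 : HypH3 ψ P δ ν)
    (q : Q) (u v : ℝ → H)
    (hu : IsCompleteTraj ϑ ψ q u) (hua : IsAmenable ν u)
    (hv : IsCompleteTraj ϑ ψ q v)
    (hV : ∀ t : ℝ, ⟪P (u t - v t), u t - v t⟫ ≤ 0) :
    IsAmenable ν v :=
  amenable_of_nonpositive_V_general ϑ ψ P δ ν h3 q u v hu hua hv hV
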